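/- If N = q^k · n² is an odd perfect number given in Eulerian form, then I(n) > (8/5)^{ln(4/3)/ln(13/9)} ≈ 1.44440557, where I(m) = σ(m)/m. -/

import Mathlib

/-!
Write `I(m) = σ(m)/m` and `t = log (13/9) / log (4/3)`. Since `I(q^k) < q/(q-1) ≤ 5/4`, the
Eulerian form `I(q^k) I(n²) = 2` forces `I(n²) > 8/5`, so it suffices that `log I(m²) ≤ t log I(m)`
for odd `m`. Both sides are additive over coprime factors, and with `x = 1/p ≤ 1/3` a prime power
`p^a` needs `log (1 + ⋯ + x^(2a)) ≤ t log (1 + ⋯ + x^a)`. For `a = 1` this is the concavity of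
`t log (1 + x) - log (1 + x + x²)`, which vanishes at `0` and at `1/3`. For `a ≥ 2` the left side
exceeds `log (1 + ⋯ + x^a)` by at most `log (1 + x^(a+1)) ≤ x³`, and `(t - 1) log (1 + x)`
absorbs this because `t ≥ 6/5`.
-/

open Real Finset
open scoped ArithmeticFunction.sigma

noncomputable def abundancy (m : ℕ) : ℝ := σ 1 m / m

lemma abundancy_pos {m : ℕ} (hm : m ≠ 0) : 0 < abundancy m := by
  have := ArithmeticFunction.sigma_pos 1 m hm
  unfold abundancy
  positivity

lemma abundancy_mul {a b : ℕ} (hab : a.Coprime b) :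
    abundancy (a * b) = abundancy a * abundancy b := by
  simp only [abundancy, ArithmeticFunction.isMultiplicative_sigma.map_mul_of_coprime hab,
    Nat.cast_mul, mul_div_mul_comm]

lemma abundancy_eq_two_of_perfect {N : ℕ} (hN : N ≠ 0) (h : σ 1 N = 2 * N) :
    abundancy N = 2 := by
  rw [abundancy, h, Nat.cast_mul, Nat.cast_two, mul_div_cancel_right₀ _ (by exact_mod_cast hN)]

lemma abundancy_eq_sum_inv_divisors {m : ℕ} (hm : m ≠ 0) :
    abundancy m = ∑ d ∈ m.divisors, (d : ℝ)⁻¹ := by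
  rw [abundancy, ArithmeticFunction.sigma_one_apply, ← Nat.sum_div_divisors, Nat.cast_sum, sum_div]
  refine sum_congr rfl fun d hd => ?_
  have hd0 : (d : ℝ) ≠ 0 := by exact_mod_cast (Nat.pos_of_mem_divisors hd).ne'
  rw [Nat.cast_div (Nat.dvd_of_mem_divisors hd) hd0, div_div_cancel_left' (by exact_mod_cast hm)]

lemma abundancy_prime_pow {p : ℕ} (hp : p.Prime) (a : ℕ) :
    abundancy (p ^ a) = ∑ i ∈ range (a + 1), ((p : ℝ)⁻¹) ^ i := by
  rw [abundancy_eq_sum_inv_divisors (pow_ne_zero a hp.ne_zero), Nat.sum_divisors_prime_pow hp]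
  simp only [Nat.cast_pow, inv_pow]

lemma geom_sum_lt_inv_one_sub {x : ℝ} (hx0 : 0 < x) (hx1 : x < 1) (n : ℕ) :
    ∑ i ∈ range n, x ^ i < (1 - x)⁻¹ :=
  calc ∑ i ∈ range n, x ^ i < ∑ i ∈ range (n + 1), x ^ i := by
        rw [sum_range_succ]; exact lt_add_of_pos_right _ (pow_pos hx0 n)
    _ ≤ x ^ 0 / (1 - x) := by
        rw [range_eq_Ico]; exact geom_sum_Ico_le_of_lt_one hx0.le hx1
    _ = (1 - x)⁻¹ := by rw [pow_zero, one_div]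

lemma abundancy_prime_pow_lt_five_fourths {p : ℕ} (hp : p.Prime) (hp5 : 5 ≤ p) (k : ℕ) :
    abundancy (p ^ k) < 5 / 4 := by
  have hp5' : (5 : ℝ) ≤ p := by exact_mod_cast hp5
  have hx : (p : ℝ)⁻¹ ≤ 1 / 5 := by rw [one_div]; gcongr
  rw [abundancy_prime_pow hp]
  calc _ < (1 - (p : ℝ)⁻¹)⁻¹ :=
        geom_sum_lt_inv_one_sub (by positivity) (by linarith) _
    _ ≤ 5 / 4 := by rw [inv_le_comm₀ (by linarith) (by norm_num)]; linarith

lemma geom_sum_two_mul_add_one_le {x : ℝ} (hx : 0 ≤ x) (a : ℕ) :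
    ∑ i ∈ range (2 * a + 1), x ^ i ≤ (∑ i ∈ range (a + 1), x ^ i) * (1 + x ^ (a + 1)) := by
  have hsplit : (∑ i ∈ range (a + 1), x ^ i) * (1 + x ^ (a + 1)) =
      ∑ i ∈ range ((a + 1) + (a + 1)), x ^ i := by
    rw [sum_range_add _ (a + 1) (a + 1), mul_one_add, sum_mul]
    simp only [pow_add, mul_comm]
  rw [hsplit]
  exact sum_le_sum_of_subset_of_nonneg (range_subset_range.mpr (by omega))
    fun i _ _ => pow_nonneg hx i

lemma six_fifths_le_log_div_log : (6 : ℝ) / 5 ≤ log (13 / 9) / log (4 / 3) := by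
  have h := log_le_log (by norm_num) (show ((4 : ℝ) / 3) ^ 6 ≤ (13 / 9) ^ 5 by norm_num)
  rw [log_pow, log_pow] at h
  rw [le_div_iff₀ (log_pos (by norm_num))]
  push_cast at h
  linarith


lemma concaveOn_mul_log_one_add_sub_log {t : ℝ} (ht : 0 ≤ t) :
    ConcaveOn ℝ (Set.Icc 0 (1 / 3)) fun x => t * log (1 + x) - log (1 + x + x ^ 2) := by
  have hderiv : ∀ y : ℝ, 0 ≤ y → HasDerivAt (fun x => t * log (1 + x) - log (1 + x + x ^ 2))
      (t / (1 + y) - (1 + 2 * y) / (1 + y + y ^ 2)) y := by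
    intro y hy
    have h1 : HasDerivAt (fun y => 1 + y) 1 y := (hasDerivAt_id y).const_add 1
    have h2 : HasDerivAt (fun y => 1 + y + y ^ 2) (1 + 2 * y) y :=
      (h1.add (hasDerivAt_pow 2 y)).congr_deriv (by norm_num)
    exact (((h1.log (by positivity)).const_mul t).sub (h2.log (by positivity))).congr_deriv
      (by ring)
  refine AntitoneOn.concaveOn_of_deriv (convex_Icc _ _)
    (fun y hy => (hderiv y hy.1).continuousAt.continuousWithinAt)
    (fun y hy => (hderiv y (interior_subset hy).1).differentiableAt.differentiableWithinAt) ?_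
  rw [interior_Icc]
  intro y hy z hz hyz
  rw [(hderiv y hy.1.le).deriv, (hderiv z hz.1.le).deriv]
  -- cross-multiplying leaves `(z - y) (1 - y - z - 2yz) ≥ 0`
  have hq : (1 + 2 * y) / (1 + y + y ^ 2) ≤ (1 + 2 * z) / (1 + z + z ^ 2) := by
    rw [div_le_div_iff₀ (by nlinarith [hy.1]) (by nlinarith [hz.1])]
    have : 0 ≤ 1 - y - z - 2 * y * z := by nlinarith [hy.1, hy.2, hz.1, hz.2]
    nlinarith [mul_nonneg (sub_nonneg.mpr hyz) this]
  have : t / (1 + z) ≤ t / (1 + y) := by gcongr; linarith [hy.1]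
  linarith

lemma log_one_add_add_sq_le {x : ℝ} (hx0 : 0 ≤ x) (hx : x ≤ 1 / 3) :
    log (1 + x + x ^ 2) ≤ log (13 / 9) / log (4 / 3) * log (1 + x) := by
  have ht : 0 ≤ log (13 / 9) / log (4 / 3) := by linarith [six_fifths_le_log_div_log]
  have h := (concaveOn_mul_log_one_add_sub_log ht).ge_on_segment (x := 0) (y := 1 / 3)
    (by norm_num) (by norm_num) (by rw [segment_eq_Icc (by norm_num)]; exact ⟨hx0, hx⟩)
  have hthird :
      log (13 / 9) / log (4 / 3) * log (1 + 1 / 3) - log (1 + 1 / 3 + (1 / 3) ^ 2) = 0 := by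
    norm_num
  simp only [hthird, add_zero, log_one, mul_zero, zero_pow two_ne_zero, sub_self, min_self] at h
  linarith

lemma log_geom_sum_two_mul_le {x : ℝ} (hx0 : 0 ≤ x) (hx : x ≤ 1 / 3) (a : ℕ) :
    log (∑ i ∈ range (2 * a + 1), x ^ i) ≤
      log (13 / 9) / log (4 / 3) * log (∑ i ∈ range (a + 1), x ^ i) := by
  set t := log (13 / 9) / log (4 / 3)
  rcases a with _ | _ | a
  · simp
  · simpa [sum_range_succ] using log_one_add_add_sq_le hx0 hx
  set A := ∑ i ∈ range (a + 2 + 1), x ^ i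
  have hA : 1 + x ≤ A := by
    calc 1 + x = ∑ i ∈ range 2, x ^ i := by simp [sum_range_succ]
      _ ≤ A := sum_le_sum_of_subset_of_nonneg (range_subset_range.mpr (by omega))
          fun i _ _ => pow_nonneg hx0 i
  have hA0 : 0 < A := by linarith
  have hsurplus : x ^ (a + 2 + 1) ≤ (t - 1) * log A := by
    have hlog : x / (1 + x) ≤ log A := by
      calc x / (1 + x) = 1 - (1 + x)⁻¹ := by field_simp; ring
        _ ≤ log (1 + x) := one_sub_inv_le_log_of_pos (by linarith)
        _ ≤ log A := log_le_log (by linarith) hA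
    have hx3 : x ^ (a + 2 + 1) ≤ x ^ 3 := pow_le_pow_of_le_one hx0 (by linarith) (by omega)
    have hxx : x ^ 3 ≤ (1 / 5) * (x / (1 + x)) := by
      rw [← mul_div_assoc, le_div_iff₀ (by linarith)]
      nlinarith [pow_le_pow_left₀ hx0 hx 2, pow_nonneg hx0 3]
    have hlogA : 0 ≤ log A := hlog.trans' (by positivity)
    nlinarith [mul_nonneg (sub_nonneg.mpr six_fifths_le_log_div_log) hlogA]
  calc log (∑ i ∈ range (2 * (a + 2) + 1), x ^ i)
      ≤ log (A * (1 + x ^ (a + 2 + 1))) :=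
        log_le_log (geom_sum_pos hx0 (by omega)) (geom_sum_two_mul_add_one_le hx0 _)
    _ = log A + log (1 + x ^ (a + 2 + 1)) := log_mul hA0.ne' (by positivity)
    _ ≤ log A + x ^ (a + 2 + 1) := by
        gcongr; linarith [log_le_sub_one_of_pos (by positivity : 0 < 1 + x ^ (a + 2 + 1))]
    _ ≤ t * log A := by linarith

lemma log_abundancy_sq_le {m : ℕ} (hm : Odd m) :
    log (abundancy (m ^ 2)) ≤ log (13 / 9) / log (4 / 3) * log (abundancy m) := by
  induction m using Nat.recOnPosPrimePosCoprime with
  | zero => simp at hm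
  | one => simp [abundancy]
  | prime_pow p a hp ha =>
    have hp3 : (3 : ℝ) ≤ p := by
      obtain ⟨k, hk⟩ := (Nat.odd_pow_iff ha.ne').mp hm
      have := hp.two_le
      exact_mod_cast (show 3 ≤ p by omega)
    rw [← pow_mul, mul_comm, abundancy_prime_pow hp, abundancy_prime_pow hp]
    exact log_geom_sum_two_mul_le (by positivity)
      (by rw [inv_le_comm₀ (by linarith) (by norm_num)]; linarith) a
  | coprime a b ha hb hab iha ihb =>
    obtain ⟨hoa, hob⟩ := Nat.odd_mul.mp hm
    rw [mul_pow, abundancy_mul hab, abundancy_mul (hab.pow 2 2),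
      log_mul (abundancy_pos (by positivity)).ne' (abundancy_pos (by positivity)).ne',
      log_mul (abundancy_pos (by positivity)).ne' (abundancy_pos (by positivity)).ne', mul_add]
    exact add_le_add (iha hoa) (ihb hob)

theorem stmt_8_general (N q k n : ℕ) (hodd : Odd N) (hperf : ArithmeticFunction.sigma 1 N = 2 * N)
    (hq : q.Prime) (hq4 : q % 4 = 1)
    (hgcd : Nat.gcd q n = 1) (hN : N = q ^ k * n ^ 2) :
    ((8 : ℝ) / 5) ^ (Real.log (4 / 3) / Real.log (13 / 9)) <
      (ArithmeticFunction.sigma 1 n : ℝ) / n := by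
  have hq5 : 5 ≤ q := by have := hq.two_le; omega
  have hn : Odd n := (Nat.odd_pow_iff two_ne_zero).mp (Nat.odd_mul.mp (hN ▸ hodd)).2
  have hEuler : abundancy (q ^ k) * abundancy (n ^ 2) = 2 := by
    rw [← abundancy_mul (Nat.Coprime.pow k 2 hgcd), ← hN,
      abundancy_eq_two_of_perfect hodd.pos.ne' hperf]
  have hsq : 8 / 5 < abundancy (n ^ 2) := by
    nlinarith [abundancy_prime_pow_lt_five_fourths hq hq5 k,
      abundancy_pos (pow_ne_zero 2 hn.pos.ne')]
  have hlog : log (8 / 5) < log (13 / 9) / log (4 / 3) * log (abundancy n) :=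
    (log_lt_log (by norm_num) hsq).trans_le (log_abundancy_sq_le hn)
  have ht : 0 < log (13 / 9) / log (4 / 3) := by linarith [six_fifths_le_log_div_log]
  change _ < abundancy n
  rw [rpow_def_of_pos (by norm_num), ← lt_log_iff_exp_lt (abundancy_pos hn.pos.ne'),
    ← mul_div_assoc, ← div_div_eq_mul_div, div_lt_iff₀' ht]
  exact hlog

theorem stmt_8 (N q k n : ℕ) (hodd : Odd N) (hperf : ArithmeticFunction.sigma 1 N = 2 * N)
    (hq : q.Prime) (hq4 : q % 4 = 1) (hk4 : k % 4 = 1)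
    (hgcd : Nat.gcd q n = 1) (hN : N = q ^ k * n ^ 2) :
    ((8 : ℝ) / 5) ^ (Real.log (4 / 3) / Real.log (13 / 9)) <
      (ArithmeticFunction.sigma 1 n : ℝ) / n :=
  stmt_8_general N q k n hodd hperf hq hq4 hgcd hN
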